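/- For every complex number z with |z| < 1, the sum over k >= 0 of (H_{2k} - H_k) * z^k / ((3k+1) * binomial(3k,k)) equals -∫_0^1 ln(x/(1-x)) / (1 - z*x*(1-x)²) dx. -/

import Mathlib

/-!
Expand `1 / (1 - z x (1 - x)²)` as a geometric series; since `|x (1 - x)²| ≤ 1` on `[0, 1]`, the
terms are dominated by `|log (x / (1 - x))| ‖z‖ ^ k`, so the series may be integrated termwise.
The `k`-th term is `z ^ k ∫ x ^ k (1 - x) ^ (2k) log (x / (1 - x))`.

The log-moments `J a b = ∫₀¹ x ^ a (1 - x) ^ b log x` satisfy `J a (b + 1) = J a b - J (a + 1) b`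
and `J a 0 = -1 / (a + 1)²`, which gives `J a b = a! b! / (a + b + 1)! * (H a - H (a + b + 1))`.
The reflection `x ↦ 1 - x` turns the `log (1 - x)` part into `J b a`, so the harmonic numbers
`H (a + b + 1)` cancel, and `k! (2k)! / (3k + 1)! = 1 / ((3k + 1) * binom(3k, k))`.
-/

open MeasureTheory intervalIntegral Set
open scoped Nat Interval

lemma integral_pow_mul_log (a : ℕ) :
    ∫ x in (0:ℝ)..1, x ^ a * Real.log x = -1 / ((a : ℝ) + 1) ^ 2 := by
  have ha : (a : ℝ) + 1 ≠ 0 := by positivity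
  let G : ℝ → ℝ := fun x => x ^ (a + 1) * ((a + 1) * Real.log x - 1) / (a + 1) ^ 2
  have hG : ContinuousOn G (Icc 0 1) := by
    have hG_eq :
        G = fun x => ((a + 1) * (x ^ a * (x * Real.log x)) - x ^ (a + 1)) / (a + 1) ^ 2 := by
      ext x; simp only [G]; ring
    have := Real.continuous_mul_log
    rw [hG_eq]
    fun_prop
  have hG' : ∀ x ∈ Ioo (0:ℝ) 1, HasDerivAt G (x ^ a * Real.log x) x := by
    intro x hx
    have h := (((hasDerivAt_pow (a + 1) x).mul (((Real.hasDerivAt_log hx.1.ne').const_mul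
      ((a : ℝ) + 1)).sub_const 1)).div_const (((a : ℝ) + 1) ^ 2))
    refine h.congr_deriv ?_
    have hx₀ : x ≠ 0 := hx.1.ne'
    rw [Nat.add_sub_cancel, pow_succ]
    push_cast
    field_simp
    ring
  rw [integral_eq_sub_of_hasDerivAt_of_le zero_le_one hG hG'
    (intervalIntegrable_log'.continuousOn_mul (by fun_prop))]
  simp [G]

-- Valid for every real `x`, because `Real.log 0 = 0`.
lemma log_div_one_sub (x : ℝ) : Real.log (x / (1 - x)) = Real.log x - Real.log (1 - x) := by
  rcases eq_or_ne x 0 with rfl | hx₀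
  · simp
  rcases eq_or_ne x 1 with rfl | hx₁
  · simp
  exact Real.log_div hx₀ (sub_ne_zero.2 hx₁.symm)

lemma intervalIntegrable_log_one_sub {a b : ℝ} :
    IntervalIntegrable (fun x => Real.log (1 - x)) volume a b := by
  simpa using (intervalIntegrable_log' (a := 1 - a) (b := 1 - b)).comp_sub_left 1

lemma intervalIntegrable_log_div_one_sub {a b : ℝ} :
    IntervalIntegrable (fun x => Real.log (x / (1 - x))) volume a b := by
  simpa only [log_div_one_sub] using intervalIntegrable_log'.sub intervalIntegrable_log_one_sub

lemma integral_pow_mul_one_sub_pow_mul_log (a b : ℕ) :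
    ∫ x in (0:ℝ)..1, x ^ a * (1 - x) ^ b * Real.log x =
      (a ! * b ! : ℝ) / (a + b + 1)! * (harmonic a - harmonic (a + b + 1)) := by
  induction b generalizing a with
  | zero =>
    have ha : (a : ℝ) + 1 ≠ 0 := by positivity
    simp only [pow_zero, mul_one, integral_pow_mul_log, add_zero, Nat.factorial_succ,
      Nat.factorial_zero, harmonic_succ]
    push_cast
    field_simp
    ring
  | succ b ih =>
    have split : ∀ x : ℝ, x ^ a * (1 - x) ^ (b + 1) * Real.log x =
        x ^ a * (1 - x) ^ b * Real.log x - x ^ (a + 1) * (1 - x) ^ b * Real.log x := by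
      intro x; ring
    simp_rw [split]
    rw [intervalIntegral.integral_sub (intervalIntegrable_log'.continuousOn_mul (by fun_prop))
      (intervalIntegrable_log'.continuousOn_mul (by fun_prop)), ih, ih,
      show a + (b + 1) + 1 = a + b + 1 + 1 by ring, show a + 1 + b + 1 = a + b + 1 + 1 by ring,
      harmonic_succ (a + b + 1), harmonic_succ a, Nat.factorial_succ (a + b + 1),
      Nat.factorial_succ a, Nat.factorial_succ b]
    push_cast
    field_simp
    ring

lemma integral_pow_mul_one_sub_pow_mul_log_div (a b : ℕ) :
    ∫ x in (0:ℝ)..1, x ^ a * (1 - x) ^ b * Real.log (x / (1 - x)) =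
      (a ! * b ! : ℝ) / (a + b + 1)! * (harmonic a - harmonic b) := by
  have reflect : ∫ x in (0:ℝ)..1, x ^ a * (1 - x) ^ b * Real.log (1 - x) =
      ∫ x in (0:ℝ)..1, x ^ b * (1 - x) ^ a * Real.log x := by
    simpa [mul_comm] using
      integral_comp_sub_left (fun x : ℝ => x ^ b * (1 - x) ^ a * Real.log x) 1 (a := 0) (b := 1)
  simp_rw [log_div_one_sub, mul_sub]
  rw [intervalIntegral.integral_sub (intervalIntegrable_log'.continuousOn_mul (by fun_prop))
    (intervalIntegrable_log_one_sub.continuousOn_mul (by fun_prop)), reflect,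
    integral_pow_mul_one_sub_pow_mul_log, integral_pow_mul_one_sub_pow_mul_log, add_comm b a]
  ring

lemma integral_div_one_sub_eq_tsum {a b r : ℝ} {f w : ℝ → ℂ}
    (hf : IntervalIntegrable f volume a b) (hw : Continuous w) (hwr : ∀ x ∈ Ι a b, ‖w x‖ ≤ r)
    (hr₀ : 0 ≤ r) (hr : r < 1) :
    ∫ x in a..b, f x / (1 - w x) = ∑' k : ℕ, ∫ x in a..b, f x * w x ^ k := by
  refine (intervalIntegral.hasSum_integral_of_dominated_convergence
    (F := fun k x => f x * w x ^ k) (fun k x => ‖f x‖ * r ^ k)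
    (fun k => hf.def'.aestronglyMeasurable.mul (hw.pow k).aestronglyMeasurable)
    ?_ ?_ ?_ ?_).tsum_eq.symm
  · refine fun k => ae_of_all _ fun x hx => ?_
    rw [norm_mul, norm_pow]
    gcongr
    exact hwr x hx
  · exact ae_of_all _ fun x _ => (summable_geometric_of_lt_one hr₀ hr).mul_left _
  · simp_rw [tsum_mul_left, tsum_geometric_of_lt_one hr₀ hr]
    exact hf.norm.mul_const _
  · refine ae_of_all _ fun x hx => ?_
    simpa [div_eq_mul_inv] using
      (hasSum_geometric_of_norm_lt_one ((hwr x hx).trans_lt hr)).mul_left (f x)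

lemma factorial_mul_factorial_div_factorial_add_one (a b : ℕ) :
    (a ! * b ! : ℝ) / (a + b + 1)! = ((a + b + 1) * (a + b).choose a : ℝ)⁻¹ := by
  rw [Nat.factorial_succ, ← Nat.choose_mul_factorial_mul_factorial (Nat.le_add_right a b),
    Nat.add_sub_cancel_left]
  push_cast
  field_simp

lemma integral_log_div_one_sub_mul_pow (z : ℂ) (k : ℕ) :
    ∫ x in (0:ℝ)..1, (Real.log (x / (1 - x)) : ℂ) * (z * x * (1 - x) ^ 2) ^ k =
      z ^ k * (((3 * k + 1) * (3 * k).choose k : ℝ)⁻¹ * (harmonic k - harmonic (2 * k)) : ℝ) := by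
  have h : ∀ x : ℝ, (Real.log (x / (1 - x)) : ℂ) * (z * x * (1 - x) ^ 2) ^ k =
      z ^ k * ((x ^ k * (1 - x) ^ (2 * k) * Real.log (x / (1 - x)) : ℝ) : ℂ) := by
    intro x; rw [mul_pow, mul_pow, ← pow_mul]; push_cast; ring
  simp_rw [h, intervalIntegral.integral_const_mul, intervalIntegral.integral_ofReal,
    integral_pow_mul_one_sub_pow_mul_log_div, factorial_mul_factorial_div_factorial_add_one,
    show k + 2 * k = 3 * k by ring]
  push_cast
  ring

lemma norm_mul_mul_one_sub_sq_le (z : ℂ) {x : ℝ} (hx : x ∈ Icc (0:ℝ) 1) :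
    ‖z * x * (1 - x) ^ 2‖ ≤ ‖z‖ := by
  have h₁ : ‖(1 - x : ℂ)‖ ≤ 1 := by
    rw [← Complex.ofReal_one, ← Complex.ofReal_sub, Complex.norm_real, Real.norm_of_nonneg] <;>
      linarith [hx.1, hx.2]
  have h₂ : ‖(x : ℂ)‖ ≤ 1 := by
    rw [Complex.norm_real, Real.norm_of_nonneg hx.1]; exact hx.2
  rw [norm_mul, norm_mul, norm_pow]
  calc ‖z‖ * ‖(x : ℂ)‖ * ‖(1 - x : ℂ)‖ ^ 2 ≤ ‖z‖ * 1 * 1 ^ 2 := by gcongr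
    _ = ‖z‖ := by ring

theorem stmt_15 (z : ℂ) (hz : ‖z‖ < 1) :
    ∑' k : ℕ, ((harmonic (2 * k) : ℂ) - (harmonic k : ℂ)) * z ^ k /
        ((3 * k + 1) * (Nat.choose (3 * k) k : ℂ)) =
      -∫ x in (0:ℝ)..1, (Real.log (x / (1 - x)) : ℂ) /
        (1 - z * (x : ℂ) * (1 - (x : ℂ)) ^ 2) := by
  have hlog : IntervalIntegrable (fun x : ℝ => (Real.log (x / (1 - x)) : ℂ)) volume 0 1 :=
    ⟨intervalIntegrable_log_div_one_sub.1.ofReal, intervalIntegrable_log_div_one_sub.2.ofReal⟩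
  rw [integral_div_one_sub_eq_tsum hlog (by fun_prop)
    (fun x hx => norm_mul_mul_one_sub_sq_le z (Ioc_subset_Icc_self (by simpa using hx)))
    (norm_nonneg z) hz, ← tsum_neg]
  refine tsum_congr fun k => ?_
  rw [integral_log_div_one_sub_mul_pow]
  push_cast
  ring
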